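/- Let λ, d > 0, P(x, S) = 2dλ − x³ + xS, S* the unique positive solution of P(x, x) = 0, R = {(x, S) ∈ ℝ²_{≥0} : S ≤ x, P(x, S) ≥ 0}, and suppose the step size satisfies η < min{2/(3(S*+1)²), 2/max_{(x,S)∈R} P(x, S)}. Define the sequence (x_t, S_t) by x_0 = S_0 = 0, x_{t+1} = x_t + (η/2) P(x_t, S_t), S_{t+1} = S_t + (η²/4) P(x_t, S_t)². Then (x_t, S_t) ∈ R for every t ≥ 0; in particular S_t ≤ x_t and P(x_t, S_t) ≥ 0 for all t, and the sequence is bounded. -/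

import Mathlib

/-!
Every point of `R` has `x ≤ S*`: on `R`, `x³ − x² ≤ x³ − xS ≤ 2dλ = S*³ − S*²`, and `t ↦ t³ − t²`
is increasing on `[1, ∞)`, which contains `S*`. An iteration step adds `h = (η/2)P` to `x` and `h²`
to `S`, and lowers `P` by exactly `h (3x² − S + 2xh) ≤ h · 3(S*+1)²`; the first step-size bound makes
this at most `P`, while the second gives `h ≤ 1`, so that `S + h² ≤ x + h`. Hence `R` is invariant,
and it is contained in the square `[0, S*]²`.
-/

namespace DriftIteration

def drift (c x S : ℝ) : ℝ := c - x ^ 3 + x * S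

def region (c : ℝ) : Set (ℝ × ℝ) :=
  {p | 0 ≤ p.1 ∧ 0 ≤ p.2 ∧ p.2 ≤ p.1 ∧ 0 ≤ drift c p.1 p.2}

noncomputable def step (c η : ℝ) (p : ℝ × ℝ) : ℝ × ℝ :=
  (p.1 + η / 2 * drift c p.1 p.2, p.2 + η ^ 2 / 4 * drift c p.1 p.2 ^ 2)

variable {c s : ℝ}

lemma drift_add (c x S h : ℝ) :
    drift c (x + h) (S + h ^ 2) = drift c x S - h * (3 * x ^ 2 - S + 2 * x * h) := by
  unfold drift; ring

lemma zero_mem_region (hc : 0 < c) : ((0, 0) : ℝ × ℝ) ∈ region c :=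
  ⟨le_rfl, le_rfl, le_rfl, by simp [drift, hc.le]⟩

lemma one_lt_of_drift_self_eq_zero (hc : 0 < c) (hs : drift c s s = 0) : 1 < s := by
  unfold drift at hs; nlinarith [sq_nonneg s]

lemma fst_le_of_mem_region (hc : 0 < c) (hs : drift c s s = 0) {p : ℝ × ℝ}
    (hp : p ∈ region c) : p.1 ≤ s := by
  obtain ⟨hx, -, hSx, hP⟩ := hp
  have hs1 := one_lt_of_drift_self_eq_zero hc hs
  unfold drift at hs hP
  by_contra! hlt
  have hpos : 0 < p.1 ^ 2 + p.1 * s + s ^ 2 - p.1 - s := by nlinarith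
  -- `x³ − x² − (s³ − s²) = (x − s)(x² + xs + s² − x − s)`
  nlinarith [mul_pos (sub_pos.mpr hlt) hpos]

lemma region_subset_Icc_prod (hc : 0 < c) (hs : drift c s s = 0) :
    region c ⊆ Set.Icc 0 s ×ˢ Set.Icc 0 s := by
  intro p hp
  have hx := fst_le_of_mem_region hc hs hp
  exact ⟨⟨hp.1, hx⟩, ⟨hp.2.1, hp.2.2.1.trans hx⟩⟩

lemma isBounded_region (hc : 0 < c) (hs : drift c s s = 0) :
    Bornology.IsBounded (region c) :=
  (Metric.isBounded_Icc 0 s |>.prod (Metric.isBounded_Icc 0 s)).subset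
    (region_subset_Icc_prod hc hs)

lemma add_mem_region {x S h : ℝ} (hp : (x, S) ∈ region c) (hxs : x ≤ s) (hh₀ : 0 ≤ h)
    (hh₁ : h ≤ 1) (hhP : h * (3 * (s + 1) ^ 2) ≤ drift c x S) :
    (x + h, S + h ^ 2) ∈ region c := by
  obtain ⟨hx, hS, hSx, -⟩ := hp
  have hxh : x * h ≤ s := by nlinarith
  have hcoef : 3 * x ^ 2 - S + 2 * x * h ≤ 3 * (s + 1) ^ 2 := by nlinarith
  refine ⟨by linarith, by positivity, by nlinarith, ?_⟩
  rw [drift_add]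
  nlinarith [mul_le_mul_of_nonneg_left hcoef hh₀]

theorem mapsTo_step_region {η M : ℝ} (hc : 0 < c) (hs : drift c s s = 0) (hη : 0 < η)
    (hM : ∀ p ∈ region c, drift c p.1 p.2 ≤ M) (hηM : η * M ≤ 2)
    (hηs : η * (3 * (s + 1) ^ 2) ≤ 2) :
    Set.MapsTo (step c η) (region c) (region c) := by
  rintro ⟨x, S⟩ hp
  have hP := hp.2.2.2
  have hPM : η * drift c x S ≤ η * M := mul_le_mul_of_nonneg_left (hM _ hp) hη.le
  have hstep : step c η (x, S) = (x + η / 2 * drift c x S, S + (η / 2 * drift c x S) ^ 2) := by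
    simp only [step, Prod.mk.injEq, true_and]; ring
  rw [hstep]
  refine add_mem_region hp (fst_le_of_mem_region hc hs hp) (by positivity) (by linarith) ?_
  nlinarith [mul_le_mul_of_nonneg_right hηs hP]

end DriftIteration

open DriftIteration in
theorem stmt_12_general (lam d η : ℝ) (hlam : 0 < lam) (hd : 0 < d) (hη : 0 < η)
    (Sstar : ℝ)
    (hSstarroot : 2 * d * lam - Sstar ^ 3 + Sstar * Sstar = 0)
    (Pmax : ℝ)
    (hPmax : IsGreatest ((fun p : ℝ × ℝ => 2 * d * lam - p.1 ^ 3 + p.1 * p.2) ''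
      {p : ℝ × ℝ | 0 ≤ p.1 ∧ 0 ≤ p.2 ∧ p.2 ≤ p.1 ∧
        0 ≤ 2 * d * lam - p.1 ^ 3 + p.1 * p.2}) Pmax)
    (hηbound : η < min (2 / (3 * (Sstar + 1) ^ 2)) (2 / Pmax))
    (x S : ℕ → ℝ) (hx0 : x 0 = 0) (hS0 : S 0 = 0)
    (hx : ∀ t, x (t + 1) = x t + (η / 2) * (2 * d * lam - (x t) ^ 3 + x t * S t))
    (hS : ∀ t, S (t + 1) = S t + (η ^ 2 / 4) * (2 * d * lam - (x t) ^ 3 + x t * S t) ^ 2) :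
    (∀ t, (x t, S t) ∈ {p : ℝ × ℝ | 0 ≤ p.1 ∧ 0 ≤ p.2 ∧ p.2 ≤ p.1 ∧
        0 ≤ 2 * d * lam - p.1 ^ 3 + p.1 * p.2}) ∧
    (∀ t, S t ≤ x t ∧ 0 ≤ 2 * d * lam - (x t) ^ 3 + x t * S t) ∧
    Bornology.IsBounded (Set.range fun t => ((x t, S t) : ℝ × ℝ)) := by
  have hc : 0 < 2 * d * lam := by positivity
  have hM : ∀ p ∈ region (2 * d * lam), drift (2 * d * lam) p.1 p.2 ≤ Pmax :=
    fun p hp => hPmax.2 ⟨p, hp, rfl⟩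
  have hPmax_pos : 0 < Pmax := hc.trans_le (by simpa [drift] using hM _ (zero_mem_region hc))
  have hηs : η * (3 * (Sstar + 1) ^ 2) ≤ 2 := by
    have hs1 := one_lt_of_drift_self_eq_zero hc hSstarroot
    exact ((lt_div_iff₀ (by positivity)).mp (hηbound.trans_le (min_le_left _ _))).le
  have hηM : η * Pmax ≤ 2 := by
    have := (lt_div_iff₀ hPmax_pos).mp (hηbound.trans_le (min_le_right _ _))
    linarith
  have hmem : ∀ t, (x t, S t) ∈ region (2 * d * lam) := by
    intro t
    induction t with
    | zero => simpa [hx0, hS0] using zero_mem_region hc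
    | succ t ih =>
      rw [hx, hS]
      exact mapsTo_step_region hc hSstarroot hη hM hηM hηs ih
  refine ⟨hmem, fun t => ⟨(hmem t).2.2.1, (hmem t).2.2.2⟩, ?_⟩
  exact (isBounded_region hc hSstarroot).subset (Set.range_subset_iff.mpr hmem)

/-- With `P(x, S) = 2dλ − x³ + xS`, `S*` the unique positive solution of `P(x, x) = 0`,
`R = {(x, S) ∈ ℝ²_{≥0} : S ≤ x, P(x, S) ≥ 0}`, and step size
`η < min{2/(3(S*+1)²), 2/max_R P}`, the sequence defined by `x_0 = S_0 = 0`,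
`x_{t+1} = x_t + (η/2) P(x_t, S_t)`, `S_{t+1} = S_t + (η²/4) P(x_t, S_t)²`
stays in `R` for all `t` (in particular `S_t ≤ x_t` and `P(x_t, S_t) ≥ 0`), and is bounded. -/
theorem stmt_12 (lam d η : ℝ) (hlam : 0 < lam) (hd : 0 < d) (hη : 0 < η)
    (Sstar : ℝ) (hSstar : 0 < Sstar)
    (hSstarroot : 2 * d * lam - Sstar ^ 3 + Sstar * Sstar = 0)
    (hSstaruniq : ∀ z, 0 < z → 2 * d * lam - z ^ 3 + z * z = 0 → z = Sstar)
    (Pmax : ℝ)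
    (hPmax : IsGreatest ((fun p : ℝ × ℝ => 2 * d * lam - p.1 ^ 3 + p.1 * p.2) ''
      {p : ℝ × ℝ | 0 ≤ p.1 ∧ 0 ≤ p.2 ∧ p.2 ≤ p.1 ∧
        0 ≤ 2 * d * lam - p.1 ^ 3 + p.1 * p.2}) Pmax)
    (hηbound : η < min (2 / (3 * (Sstar + 1) ^ 2)) (2 / Pmax))
    (x S : ℕ → ℝ) (hx0 : x 0 = 0) (hS0 : S 0 = 0)
    (hx : ∀ t, x (t + 1) = x t + (η / 2) * (2 * d * lam - (x t) ^ 3 + x t * S t))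
    (hS : ∀ t, S (t + 1) = S t + (η ^ 2 / 4) * (2 * d * lam - (x t) ^ 3 + x t * S t) ^ 2) :
    (∀ t, (x t, S t) ∈ {p : ℝ × ℝ | 0 ≤ p.1 ∧ 0 ≤ p.2 ∧ p.2 ≤ p.1 ∧
        0 ≤ 2 * d * lam - p.1 ^ 3 + p.1 * p.2}) ∧
    (∀ t, S t ≤ x t ∧ 0 ≤ 2 * d * lam - (x t) ^ 3 + x t * S t) ∧
    Bornology.IsBounded (Set.range fun t => ((x t, S t) : ℝ × ℝ)) :=
  stmt_12_general lam d η hlam hd hη Sstar hSstarroot Pmax hPmax hηbound x S hx0 hS0 hx hS
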